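/- arXiv:1501.06681 — 2 statements merged into one kernel-verified Lean document; each statement's English description precedes it below -/
import Mathlib

section
/- Let G be a graph on n ≥ 4 vertices with no universal line. If G induces exactly n distinct lines, then G consists of a clique of size n−1 together with one additional vertex having at most one neighbor in the clique. -/
/-!
A line is either a non-edge `{a, b}` or the line of an edge, so with `m` non-edges there are
exactly `n - m` distinct edge lines. For an edge `ab` the line `ab` is the complement of
`N(a) ∪ N(b)`, neighbourhoods taken in `Gᶜ`. If `Gᶜ` has `c` components then `m ≥ n - c`, while
one vertex from each component gives `2(c - 1)` distinct edge lines; so three edge lines are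
impossible. A single edge line would be universal unless some vertex is isolated, and then the
`n - 1` non-edges at that vertex are all of them. With exactly two edge lines `L₁, L₂`, the
non-edges join the vertices whose edges all have line `L₁` to those whose edges all have line `L₂`
(at most one vertex sees both, being universal); a complete bipartite graph with `n - 2` edges on
at least `n - 1` vertices has a side consisting of one vertex, and it has degree at most one in `G`.
-/

def gline {V : Type*} (G : SimpleGraph V) [DecidableRel G.Adj] (a b : V) : Set V :=
  if G.Adj a b then {a, b} ∪ {c | G.Adj a c ∧ G.Adj b c} else {a, b}

def glines {V : Type*} (G : SimpleGraph V) [DecidableRel G.Adj] : Set (Set V) :=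
  {s | ∃ a b, a ≠ b ∧ s = gline G a b}

open Finset SimpleGraph

section Lines

variable {V : Type*} {G : SimpleGraph V} [DecidableRel G.Adj] {a b z : V}

theorem gline_of_not_adj (h : ¬G.Adj a b) : gline G a b = {a, b} := if_neg h

theorem mem_gline_of_adj (h : G.Adj a b) :
    z ∈ gline G a b ↔ z = a ∨ z = b ∨ G.Adj a z ∧ G.Adj b z := by
  simp only [gline, if_pos h, Set.mem_union, Set.mem_insert_iff, Set.mem_singleton_iff,
    Set.mem_ofPred_eq, or_assoc]

theorem notMem_gline_iff (h : G.Adj a b) : z ∉ gline G a b ↔ Gᶜ.Adj a z ∨ Gᶜ.Adj b z := by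
  rw [mem_gline_of_adj h, compl_adj, compl_adj]
  by_cases hza : z = a
  · simp [hza, h.symm]
  by_cases hzb : z = b
  · simp [hzb, h]
  simp [hza, hzb, Ne.symm hza, Ne.symm hzb, imp_iff_not_or]

theorem left_mem_gline (a b : V) : a ∈ gline G a b := by
  unfold gline; split_ifs <;> simp

theorem gline_comm (a b : V) : gline G a b = gline G b a := by
  by_cases h : G.Adj a b
  · ext z; rw [mem_gline_of_adj h, mem_gline_of_adj h.symm]; tauto
  · rw [gline_of_not_adj h, gline_of_not_adj (mt G.adj_symm h), Set.pair_comm]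

/-- A line through two vertices without non-neighbours is universal. -/
theorem eq_of_forall_not_compl_adj (huniv : ∀ a b : V, a ≠ b → gline G a b ≠ Set.univ)
    {v w : V} (hv : ∀ z, ¬Gᶜ.Adj v z) (hw : ∀ z, ¬Gᶜ.Adj w z) : v = w := by
  by_contra hne
  have hadj : G.Adj v w := by simpa [compl_adj, hne] using hv w
  exact huniv v w hne <| Set.eq_univ_of_forall fun z => by
    by_contra hz
    exact ((notMem_gline_iff hadj).1 hz).elim (hv z) (hw z)

def edgeLines (G : SimpleGraph V) [DecidableRel G.Adj] : Set (Set V) :=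
  {s | ∃ a b, G.Adj a b ∧ s = gline G a b}

theorem gline_mem_edgeLines (h : G.Adj a b) : gline G a b ∈ edgeLines G := ⟨a, b, h, rfl⟩

/-- The lines of non-adjacent pairs are the edges of the complement, viewed as sets. -/
theorem ncard_glines [Fintype V] [DecidableEq V] :
    (glines G).ncard = #Gᶜ.edgeFinset + (edgeLines G).ncard := by
  set toSet : Sym2 V → Set V := fun e => {v | v ∈ e}
  have hinj : toSet.Injective := fun e e' h => Sym2.ext fun v => Set.ext_iff.1 h v
  have hpair (a b : V) : toSet s(a, b) = {a, b} := by ext; simp [toSet]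
  have hsplit : glines G = toSet '' Gᶜ.edgeSet ∪ edgeLines G := by
    ext s
    constructor
    · rintro ⟨a, b, hab, rfl⟩
      by_cases h : G.Adj a b
      · exact Or.inr ⟨a, b, h, rfl⟩
      · exact Or.inl ⟨s(a, b), (compl_adj G a b).2 ⟨hab, h⟩, by rw [hpair, gline_of_not_adj h]⟩
    · rintro (⟨e, he, rfl⟩ | ⟨a, b, h, rfl⟩)
      · induction e using Sym2.ind with
        | h a b =>
          have hab := (compl_adj G a b).1 he
          exact ⟨a, b, hab.1, by rw [hpair, gline_of_not_adj hab.2]⟩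
      · exact ⟨a, b, h.ne, rfl⟩
  have hdisj : Disjoint (toSet '' Gᶜ.edgeSet) (edgeLines G) := by
    rw [Set.disjoint_left]
    rintro _ ⟨e, he, rfl⟩ ⟨a, b, h, hs⟩
    have hmem : a ∈ e ∧ b ∈ e := by
      constructor
      · exact (Set.ext_iff.1 hs a).2 (left_mem_gline a b)
      · exact (Set.ext_iff.1 hs b).2 (gline_comm (G := G) a b ▸ left_mem_gline b a)
    rw [Sym2.mem_and_mem_iff h.ne] at hmem
    rw [hmem, mem_edgeSet, compl_adj] at he
    exact he.2 h
  rw [hsplit, Set.ncard_union_eq hdisj, Set.ncard_image_of_injective _ hinj, ← coe_edgeFinset,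
    Set.ncard_coe_finset]

theorem edgeLines_nonempty [Fintype V] [DecidableEq V] (h4 : 4 ≤ Fintype.card V)
    (hlines : (glines G).ncard ≤ Fintype.card V) : (edgeLines G).Nonempty := by
  by_contra hempty
  rw [Set.not_nonempty_iff_eq_empty] at hempty
  have htop : Gᶜ = ⊤ := by
    ext a b
    simp only [compl_adj, top_adj, and_iff_left_iff_imp]
    exact fun _ h => Set.eq_empty_iff_forall_notMem.1 hempty _ (gline_mem_edgeLines h)
  have hcard : #Gᶜ.edgeFinset = (Fintype.card V).choose 2 := by
    rw [edgeFinset_inj.2 htop, card_edgeFinset_top_eq_card_choose_two]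
  obtain ⟨k, hk⟩ : ∃ k, Fintype.card V = k + 1 := ⟨_, (Nat.succ_pred_eq_of_pos (by omega)).symm⟩
  have hpascal : (k + 1).choose 2 = k + k.choose 2 := by simp [Nat.choose_succ_succ']
  have h3 : Nat.choose 3 2 ≤ k.choose 2 := Nat.choose_le_choose 2 (by omega)
  rw [ncard_glines, hcard, hk, hpascal] at hlines
  rw [show Nat.choose 3 2 = 3 by decide] at h3
  omega

theorem one_lt_ncard_edgeLines [Finite V] [Nonempty V]
    (huniv : ∀ a b : V, a ≠ b → gline G a b ≠ Set.univ) (hcover : ∀ v, ∃ w, G.Adj v w) :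
    1 < (edgeLines G).ncard := by
  have : Finite (edgeLines G) := Set.toFinite _
  by_contra! h
  have hsub := Set.ncard_le_one_iff_subsingleton.1 h
  obtain ⟨v⟩ := ‹Nonempty V›
  obtain ⟨w, hvw⟩ := hcover v
  refine huniv v w hvw.ne (Set.eq_univ_of_forall fun z => ?_)
  obtain ⟨y, hzy⟩ := hcover z
  rw [hsub (gline_mem_edgeLines hvw) (gline_mem_edgeLines hzy)]
  exact left_mem_gline z y

end Lines

section SpanningForest

variable {V : Type*} {H : SimpleGraph V}

theorem SimpleGraph.Reachable.exists_adj_dist_lt {u v : V} (h : H.Reachable u v) (hne : u ≠ v) :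
    ∃ w, H.Adj v w ∧ H.dist u w < H.dist u v := by
  obtain ⟨p, hp⟩ := h.symm.exists_walk_length_eq_dist
  obtain ⟨w, hvw, p', rfl⟩ := p.exists_eq_cons_of_ne hne.symm
  have hle : H.dist w u ≤ p'.length := dist_le p'
  rw [Walk.length_cons] at hp
  exact ⟨w, hvw, by rw [dist_comm, @dist_comm _ _ u v]; omega⟩

/-- Every vertex other than the representative of its component is charged to the edge leading
one step closer to that representative. -/
theorem SimpleGraph.card_le_card_edgeFinset_add_card_connectedComponent [Fintype V]
    [DecidableRel H.Adj] : Fintype.card V ≤ #H.edgeFinset + Nat.card H.ConnectedComponent := by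
  classical
  have := Fintype.ofFinite H.ConnectedComponent
  set root : V → V := fun v => (H.connectedComponentMk v).out
  have hroot : ∀ v, H.Reachable (root v) v := fun v => ConnectedComponent.exact (Quot.out_eq _)
  choose! parent hparent using fun v (h : root v ≠ v) => (hroot v).exists_adj_dist_lt h
  have hroots : #{v | root v = v} ≤ Nat.card H.ConnectedComponent := by
    rw [Nat.card_eq_fintype_card, ← card_univ]
    refine card_le_card_of_injOn H.connectedComponentMk (fun _ _ => mem_univ _) ?_
    intro v hv w hw hvw
    simp only [coe_filter, mem_univ, true_and, Set.mem_ofPred_eq] at hv hw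
    rw [← hv, ← hw]
    exact congrArg Quot.out hvw
  have hnonroots : #{v | ¬root v = v} ≤ #H.edgeFinset := by
    refine card_le_card_of_injOn (fun v => s(v, parent v)) (fun v hv => ?_) ?_
    · simp only [coe_filter, mem_univ, true_and, Set.mem_ofPred_eq] at hv
      simpa using (hparent v hv).1
    intro v hv w hw hvw
    simp only [coe_filter, mem_univ, true_and, Set.mem_ofPred_eq] at hv hw
    rcases Sym2.eq_iff.1 hvw with ⟨h, -⟩ | ⟨rfl, hcycle⟩
    · exact h
    · have hsame : root (parent w) = root w :=
        congrArg Quot.out (ConnectedComponent.connectedComponentMk_eq_of_adj (hparent w hw).1).symm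
      have h1 := (hparent w hw).2
      have h2 := (hparent (parent w) hv).2
      rw [hsame, hcycle] at h2
      omega
  have := card_filter_add_card_filter_not (s := univ) fun v => root v = v
  rw [card_univ] at this
  omega

end SpanningForest

section ComplementComponents

variable {V : Type*} {G : SimpleGraph V} [DecidableRel G.Adj]

theorem adj_of_not_reachable_compl {x y : V} (h : ¬Gᶜ.Reachable x y) : G.Adj x y := by
  by_contra hn
  refine h (Adj.reachable ((compl_adj G x y).2 ⟨?_, hn⟩))
  rintro rfl
  exact h (Reachable.refl x)

/-- Removing the common part `N(x)` from the complement `N(x) ∪ N(y)` of the line `xy` recovers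
the neighbourhood `N(y)` in `Gᶜ`; distinct `y`, `y'` sharing it would be reachable or universal. -/
theorem injOn_gline (huniv : ∀ a b : V, a ≠ b → gline G a b ≠ Set.univ) {x : V} {S : Set V}
    (hS : S.Pairwise fun y y' => ¬Gᶜ.Reachable y y') (hx : ∀ y ∈ S, ¬Gᶜ.Reachable x y) :
    S.InjOn (gline G x) := by
  have key : ∀ ⦃y⦄, y ∈ S → ∀ ⦃y'⦄, y' ∈ S → y ≠ y' → gline G x y = gline G x y' →
      ∀ z, ¬Gᶜ.Adj y z := by
    intro y hy y' hy' hne heq z hz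
    have hzy : z ∉ gline G x y :=
      (notMem_gline_iff (adj_of_not_reachable_compl (hx y hy))).2 (Or.inr hz)
    rw [heq, notMem_gline_iff (adj_of_not_reachable_compl (hx y' hy'))] at hzy
    rcases hzy with hxz | hy'z
    · exact hx y hy (hxz.reachable.trans hz.reachable.symm)
    · exact hS hy hy' hne (hz.reachable.trans hy'z.reachable.symm)
  intro y hy y' hy' heq
  by_contra hne
  exact hne (eq_of_forall_not_compl_adj huniv (key hy hy' hne heq)
    (key hy' hy (Ne.symm hne) heq.symm))

/-- The lines `a y` and `b y`, `y ∈ R \ {a}`, are distinct: only the latter contain `b`. -/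
theorem two_mul_le_ncard_edgeLines [Finite V] (huniv : ∀ a b : V, a ≠ b → gline G a b ≠ Set.univ)
    {R : Finset V} (hR : (R : Set V).Pairwise fun y y' => ¬Gᶜ.Reachable y y') {a b : V}
    (ha : a ∈ R) (hab : Gᶜ.Adj a b) : 2 * (#R - 1) ≤ (edgeLines G).ncard := by
  classical
  set S := R.erase a
  have hS : (S : Set V).Pairwise fun y y' => ¬Gᶜ.Reachable y y' :=
    hR.mono (by simp [S])
  have haS : ∀ y ∈ S, ¬Gᶜ.Reachable a y := fun y hy =>
    hR ha (mem_of_mem_erase hy) (ne_of_mem_erase hy).symm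
  have hbS : ∀ y ∈ S, ¬Gᶜ.Reachable b y := fun y hy h => haS y hy (hab.reachable.trans h)
  have hdisj : Disjoint (S.image (gline G a)) (S.image (gline G b)) := by
    simp only [Finset.disjoint_left, mem_image]
    rintro _ ⟨y, hy, rfl⟩ ⟨y', -, heq⟩
    have hb : b ∉ gline G a y :=
      (notMem_gline_iff (adj_of_not_reachable_compl (haS y hy))).2 (Or.inl hab)
    exact hb (heq ▸ left_mem_gline b y')
  have hsub : (↑(S.image (gline G a) ∪ S.image (gline G b)) : Set (Set V)) ⊆ edgeLines G := by
    intro s hs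
    simp only [coe_union, coe_image, Set.mem_union, Set.mem_image, mem_coe] at hs
    rcases hs with ⟨y, hy, rfl⟩ | ⟨y, hy, rfl⟩
    · exact gline_mem_edgeLines (adj_of_not_reachable_compl (haS y hy))
    · exact gline_mem_edgeLines (adj_of_not_reachable_compl (hbS y hy))
  have hcard := Set.ncard_le_ncard hsub (Set.toFinite _)
  rw [Set.ncard_coe_finset, card_union_of_disjoint hdisj,
    card_image_of_injOn (injOn_gline huniv hS haS), card_image_of_injOn (injOn_gline huniv hS hbS),
    card_erase_of_mem ha] at hcard
  omega

theorem ncard_edgeLines_le_two [Fintype V] [DecidableEq V]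
    (huniv : ∀ a b : V, a ≠ b → gline G a b ≠ Set.univ)
    (hcount : #Gᶜ.edgeFinset + (edgeLines G).ncard ≤ Fintype.card V) :
    (edgeLines G).ncard ≤ 2 := by
  by_contra! h3
  have := Fintype.ofFinite Gᶜ.ConnectedComponent
  set R := univ.image fun K : Gᶜ.ConnectedComponent => K.out
  have hRcard : #R = Nat.card Gᶜ.ConnectedComponent := by
    have hinj : Function.Injective fun K : Gᶜ.ConnectedComponent => K.out := fun K K' h => by
      rw [← Quot.out_eq K, ← Quot.out_eq K']
      exact congrArg _ h
    rw [card_image_of_injective _ hinj, card_univ, Nat.card_eq_fintype_card]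
  have hR : (R : Set V).Pairwise fun y y' => ¬Gᶜ.Reachable y y' := by
    simp only [R, coe_image, coe_univ, Set.image_univ]
    rintro _ ⟨K, rfl⟩ _ ⟨K', rfl⟩ hne hK
    refine hne (congrArg Quot.out ?_)
    rw [← Quot.out_eq K, ← Quot.out_eq K']
    exact ConnectedComponent.sound hK
  have hforest := card_le_card_edgeFinset_add_card_connectedComponent (H := Gᶜ)
  obtain ⟨a, ha, b, hab⟩ : ∃ a ∈ R, ∃ b, Gᶜ.Adj a b := by
    by_contra! hiso
    obtain ⟨a, ha, a', ha', hne⟩ := one_lt_card.1 (by omega : 1 < #R)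
    exact hne (eq_of_forall_not_compl_adj huniv (hiso a ha) (hiso a' ha'))
  have := two_mul_le_ncard_edgeLines huniv hR ha hab
  omega

end ComplementComponents

section TwoEdgeLines

variable {V : Type*} {G : SimpleGraph V} [DecidableRel G.Adj] {L L₁ L₂ : Set V}

def IsEdgeLineAt (G : SimpleGraph V) [DecidableRel G.Adj] (v : V) (L : Set V) : Prop :=
  ∃ w, G.Adj v w ∧ gline G v w = L

theorem IsEdgeLineAt.mem {v : V} (h : IsEdgeLineAt G v L) : v ∈ L := by
  obtain ⟨w, -, rfl⟩ := h
  exact left_mem_gline v w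

theorem IsEdgeLineAt.adj {v w : V} (hne : v ≠ w) (hv : IsEdgeLineAt G v L)
    (hw : IsEdgeLineAt G w L) : G.Adj v w := by
  obtain ⟨t, hvt, rfl⟩ := hv
  rcases (mem_gline_of_adj hvt).1 hw.mem with rfl | rfl | ⟨h, -⟩
  · exact absurd rfl hne
  · exact hvt
  · exact h

theorem isEdgeLineAt_or (hU : edgeLines G = {L₁, L₂}) (hcover : ∀ v, ∃ w, G.Adj v w) (v : V) :
    IsEdgeLineAt G v L₁ ∨ IsEdgeLineAt G v L₂ := by
  obtain ⟨w, hvw⟩ := hcover v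
  have hmem : gline G v w ∈ ({L₁, L₂} : Set (Set V)) := hU ▸ gline_mem_edgeLines hvw
  rcases hmem with h | h
  exacts [Or.inl ⟨w, hvw, h⟩, Or.inr ⟨w, hvw, h⟩]

theorem not_adj_of_not_isEdgeLineAt (hU : edgeLines G = {L₁, L₂}) {v w : V}
    (hv : ¬IsEdgeLineAt G v L₂) (hw : ¬IsEdgeLineAt G w L₁) : ¬G.Adj v w := by
  intro hvw
  have hmem : gline G v w ∈ ({L₁, L₂} : Set (Set V)) := hU ▸ gline_mem_edgeLines hvw
  rcases hmem with h | h
  · exact hw ⟨v, hvw.symm, (gline_comm w v).trans h⟩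
  · exact hv ⟨w, hvw, h⟩

theorem subsingleton_isEdgeLineAt_and (huniv : ∀ a b : V, a ≠ b → gline G a b ≠ Set.univ)
    (hU : edgeLines G = {L₁, L₂}) (hcover : ∀ v, ∃ w, G.Adj v w) :
    {v | IsEdgeLineAt G v L₁ ∧ IsEdgeLineAt G v L₂}.Subsingleton := by
  have huniversal : ∀ v, IsEdgeLineAt G v L₁ → IsEdgeLineAt G v L₂ → ∀ z, ¬Gᶜ.Adj v z := by
    intro v h₁ h₂ z hz
    rw [compl_adj] at hz
    rcases isEdgeLineAt_or hU hcover z with h | h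
    exacts [hz.2 (h₁.adj hz.1 h), hz.2 (h₂.adj hz.1 h)]
  exact fun v hv w hw =>
    eq_of_forall_not_compl_adj huniv (huniversal v hv.1 hv.2) (huniversal w hw.1 hw.2)

theorem exists_isEdgeLineAt_and_not (huniv : ∀ a b : V, a ≠ b → gline G a b ≠ Set.univ)
    (hU : edgeLines G = {L₁, L₂}) (hcover : ∀ v, ∃ w, G.Adj v w) :
    ∃ v, IsEdgeLineAt G v L₁ ∧ ¬IsEdgeLineAt G v L₂ := by
  obtain ⟨a, b, hab, hL₂⟩ : L₂ ∈ edgeLines G := hU ▸ Or.inr rfl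
  obtain ⟨z, hz⟩ := (Set.ne_univ_iff_exists_notMem L₂).1 (hL₂ ▸ huniv a b hab.ne)
  refine ⟨z, ?_, fun h => hz h.mem⟩
  rcases isEdgeLineAt_or hU hcover z with h | h
  exacts [h, absurd h.mem hz]

theorem degree_le_one_of_isEdgeLineAt_and_not_iff [Fintype V]
    (huniv : ∀ a b : V, a ≠ b → gline G a b ≠ Set.univ) (hU : edgeLines G = {L₁, L₂})
    (hcover : ∀ v, ∃ w, G.Adj v w) {x : V}
    (hx : ∀ v, IsEdgeLineAt G v L₁ ∧ ¬IsEdgeLineAt G v L₂ ↔ v = x) : G.degree x ≤ 1 := by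
  have hx₂ : ¬IsEdgeLineAt G x L₂ := ((hx x).2 rfl).2
  have hboth : ∀ y, G.Adj x y → IsEdgeLineAt G y L₁ ∧ IsEdgeLineAt G y L₂ := by
    intro y hy
    have h₁ : IsEdgeLineAt G y L₁ := by_contra fun h => not_adj_of_not_isEdgeLineAt hU hx₂ h hy
    exact ⟨h₁, by_contra fun h => hy.ne' ((hx y).1 ⟨h₁, h⟩)⟩
  rw [← card_neighborFinset_eq_degree, card_le_one]
  intro y hy y' hy'
  rw [mem_neighborFinset] at hy hy'
  exact subsingleton_isEdgeLineAt_and huniv hU hcover (hboth y hy) (hboth y' hy')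

theorem exists_degree_le_one_of_edgeLines_eq_pair [Fintype V] [DecidableEq V]
    (huniv : ∀ a b : V, a ≠ b → gline G a b ≠ Set.univ) (hU : edgeLines G = {L₁, L₂})
    (hcover : ∀ v, ∃ w, G.Adj v w) (hm : #Gᶜ.edgeFinset + 2 ≤ Fintype.card V) :
    ∃ x, G.degree x ≤ 1 := by
  classical
  have hU' : edgeLines G = {L₂, L₁} := hU.trans (Set.pair_comm _ _)
  set A : Finset V := {v | IsEdgeLineAt G v L₁ ∧ ¬IsEdgeLineAt G v L₂}
  set B : Finset V := {v | IsEdgeLineAt G v L₂ ∧ ¬IsEdgeLineAt G v L₁}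
  set C : Finset V := {v | IsEdgeLineAt G v L₁ ∧ IsEdgeLineAt G v L₂}
  have hcard : Fintype.card V ≤ #A + #B + #C := by
    refine (card_le_card fun v _ => ?_).trans
      ((card_union_le (A ∪ B) C).trans (Nat.add_le_add_right (card_union_le A B) _))
    have := isEdgeLineAt_or hU hcover v
    simp only [A, B, C, mem_union, mem_filter, mem_univ, true_and]
    tauto
  have hC : #C ≤ 1 := card_le_one.2 fun v hv w hw =>
    subsingleton_isEdgeLineAt_and huniv hU hcover (by simpa [C] using hv) (by simpa [C] using hw)
  have hAB : #A * #B ≤ #Gᶜ.edgeFinset := by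
    rw [← card_product]
    refine card_le_card_of_injOn (fun p => s(p.1, p.2)) ?_ ?_
    · rintro ⟨a, b⟩ hp
      simp only [A, B, coe_product, coe_filter, Set.mem_prod, mem_univ, true_and,
        Set.mem_ofPred_eq] at hp
      simp only [coe_edgeFinset, mem_edgeSet, compl_adj]
      exact ⟨by rintro rfl; exact hp.2.2 hp.1.1, not_adj_of_not_isEdgeLineAt hU hp.1.2 hp.2.2⟩
    · rintro ⟨a, b⟩ hp ⟨a', b'⟩ hp' h
      simp only [A, B, coe_product, coe_filter, Set.mem_prod, mem_univ, true_and,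
        Set.mem_ofPred_eq] at hp hp'
      rcases Sym2.eq_iff.1 h with ⟨rfl, rfl⟩ | ⟨rfl, -⟩
      · rfl
      · exact absurd hp.1.1 hp'.2.2
  have hA : 0 < #A := card_pos.2 <| by
    obtain ⟨v, hv⟩ := exists_isEdgeLineAt_and_not huniv hU hcover
    exact ⟨v, by simpa [A] using hv⟩
  have hB : 0 < #B := card_pos.2 <| by
    obtain ⟨v, hv⟩ := exists_isEdgeLineAt_and_not huniv hU' hcover
    exact ⟨v, by simpa [B] using hv⟩
  have hone : #A = 1 ∨ #B = 1 := by
    by_contra! h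
    have : #A + #B ≤ #A * #B := by nlinarith [show 2 ≤ #A by omega, show 2 ≤ #B by omega]
    omega
  rcases hone with h | h
  · obtain ⟨x, hx⟩ := card_eq_one.1 h
    exact ⟨x, degree_le_one_of_isEdgeLineAt_and_not_iff huniv hU hcover fun v => by
      simpa [A] using Finset.ext_iff.1 hx v⟩
  · obtain ⟨x, hx⟩ := card_eq_one.1 h
    exact ⟨x, degree_le_one_of_isEdgeLineAt_and_not_iff huniv hU' hcover fun v => by
      simpa [B] using Finset.ext_iff.1 hx v⟩

end TwoEdgeLines

theorem SimpleGraph.mem_of_card_edgeFinset_le_degree {V : Type*} {H : SimpleGraph V} [Fintype V]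
    [DecidableEq V] [DecidableRel H.Adj] {x : V} (h : #H.edgeFinset ≤ H.degree x) {e : Sym2 V}
    (he : e ∈ H.edgeSet) : x ∈ e := by
  rw [← card_incidenceFinset_eq_degree, incidenceFinset_eq_filter] at h
  exact card_filter_eq_iff.1 (le_antisymm (card_filter_le _ _) h) e (mem_edgeFinset.2 he)

theorem stmt_4 {V : Type*} [Fintype V] (G : SimpleGraph V) [DecidableRel G.Adj]
    (n : ℕ) (hn : Fintype.card V = n) (h4 : 4 ≤ n)
    (huniv : ∀ a b : V, a ≠ b → gline G a b ≠ Set.univ)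
    (hlines : (glines G).ncard = n) :
    ∃ x : V, (∀ a b : V, a ≠ x → b ≠ x → a ≠ b → G.Adj a b) ∧
      {y : V | G.Adj x y}.ncard ≤ 1 := by
  classical
  subst hn
  have hcount : #Gᶜ.edgeFinset + (edgeLines G).ncard = Fintype.card V := by
    rw [← ncard_glines, hlines]
  obtain ⟨x, hx, hxU⟩ : ∃ x, G.degree x ≤ 1 ∧ G.degree x < (edgeLines G).ncard := by
    by_cases hcover : ∀ v, ∃ w, G.Adj v w
    · have : Nonempty V := Fintype.card_pos_iff.1 (by omega)
      have hlt := one_lt_ncard_edgeLines huniv hcover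
      have hle := ncard_edgeLines_le_two huniv hcount.le
      obtain ⟨L₁, L₂, -, hU⟩ := Set.ncard_eq_two.1 (by omega : (edgeLines G).ncard = 2)
      obtain ⟨x, hx⟩ := exists_degree_le_one_of_edgeLines_eq_pair huniv hU hcover (by omega)
      exact ⟨x, hx, by omega⟩
    · push Not at hcover
      obtain ⟨x, hx⟩ := hcover
      have hdeg : G.degree x = 0 := by
        simpa [hx] using (G.degree_pos_iff_exists_adj x).not
      exact ⟨x, by omega, hdeg ▸ (edgeLines_nonempty h4 hlines.le).ncard_pos (Set.toFinite _)⟩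
  refine ⟨x, fun a b hax hbx hab => ?_, ?_⟩
  · by_contra hnadj
    have hcompl : #Gᶜ.edgeFinset ≤ Gᶜ.degree x := by rw [degree_compl]; omega
    have hmem := mem_of_card_edgeFinset_le_degree hcompl
      (show s(a, b) ∈ Gᶜ.edgeSet from (compl_adj G a b).2 ⟨hab, hnadj⟩)
    rcases Sym2.mem_iff.1 hmem with rfl | rfl <;> contradiction
  · change (G.neighborSet x).ncard ≤ 1
    rwa [← Nat.card_coe_set_eq, Nat.card_eq_fintype_card, card_neighborSet_eq_degree]
end

section
/- If P is a finite poset on n elements with no universal line and height at least 2, then P induces at least n distinct lines. -/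
open Classical

def pcomp {X : Type*} [PartialOrder X] (a b : X) : Prop := a < b ∨ b < a

def pline {X : Type*} [PartialOrder X] (a b : X) : Set X :=
  if pcomp a b then {a, b} ∪ {x | pcomp x a ∧ pcomp x b} else {a, b}

def plines (X : Type*) [PartialOrder X] : Set (Set X) :=
  {s | ∃ a b : X, a ≠ b ∧ s = pline a b}

/-!
Let `G` be the incomparability graph. The line of an incomparable pair is an edge `{a, b}` of `G`,
and the line of a comparable pair is the complement of `N(a) ∪ N(b)`. Fix a representative in each
of the `k` components of `G`; sending every other vertex to the edge towards a neighbour closer to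
its representative gives `n - k` distinct lines. As no line is universal, at most one vertex is
comparable to all others, so outside one component `c₀` every vertex `y` has a neighbour; the lines
through a fixed `x₀ ∈ c₀` and such `y` are then told apart by `N(y)`, which gives `k` more lines,
all of comparable pairs.
-/

namespace SimpleGraph

variable {V : Type*} {G : SimpleGraph V}

theorem connectedComponentMk_out (c : G.ConnectedComponent) : G.connectedComponentMk c.out = c :=
  c.out_eq

theorem Reachable.exists_adj_dist_lt_s10 {v r : V} (h : G.Reachable v r) (hne : v ≠ r) :
    ∃ w, G.Adj v w ∧ G.dist w r < G.dist v r := by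
  obtain ⟨p, hp⟩ := h.exists_walk_length_eq_dist
  cases p with
  | nil => exact absurd rfl hne
  | @cons _ w _ hadj q =>
    refine ⟨w, hadj, ?_⟩
    have := dist_le q
    rw [← hp, Walk.length_cons]
    omega

theorem disjoint_neighborSet_of_connectedComponentMk_ne {v w : V}
    (h : G.connectedComponentMk v ≠ G.connectedComponentMk w) :
    Disjoint (G.neighborSet v) (G.neighborSet w) :=
  Set.disjoint_left.2 fun _ hv hw =>
    h ((ConnectedComponent.connectedComponentMk_eq_of_adj hv).trans
      (ConnectedComponent.connectedComponentMk_eq_of_adj hw).symm)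

theorem connectedComponentMk_eq_of_neighborSet_eq {v w : V} (hv : (G.neighborSet v).Nonempty)
    (h : G.neighborSet v = G.neighborSet w) :
    G.connectedComponentMk v = G.connectedComponentMk w := by
  by_contra hne
  obtain ⟨u, hu⟩ := hv
  exact Set.disjoint_left.1 (disjoint_neighborSet_of_connectedComponentMk_ne hne) hu (h ▸ hu)

theorem exists_injOn_parent_edge (G : SimpleGraph V) :
    ∃ p : V → V, (∀ v, (G.connectedComponentMk v).out ≠ v → G.Adj v (p v)) ∧
      Set.InjOn (fun v ↦ s(v, p v)) {v | (G.connectedComponentMk v).out ≠ v} := by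
  have hparent : ∀ v, (G.connectedComponentMk v).out ≠ v → ∃ w, G.Adj v w ∧
      G.dist w (G.connectedComponentMk v).out < G.dist v (G.connectedComponentMk v).out :=
    fun v hv => (ConnectedComponent.exact (connectedComponentMk_out _).symm).exists_adj_dist_lt_s10
      (Ne.symm hv)
  choose! p hadj hdist using hparent
  -- two vertices cannot each be strictly closer to the common representative than the other
  refine ⟨p, hadj, fun v hv w hw hvw => ?_⟩
  rcases Sym2.eq_iff.1 hvw with ⟨rfl, -⟩ | ⟨hv_eq, hw_eq⟩
  · rfl
  have hcc : G.connectedComponentMk w = G.connectedComponentMk v :=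
    hw_eq ▸ (ConnectedComponent.connectedComponentMk_eq_of_adj (hadj v hv)).symm
  have h1 := hdist v hv
  have h2 := hdist w hw
  rw [hw_eq] at h1
  rw [hcc, ← hv_eq] at h2
  omega

end SimpleGraph

open SimpleGraph

section Poset

variable {X : Type*} [PartialOrder X] {a b c d : X}

theorem pcomp.symm (h : pcomp a b) : pcomp b a := Or.symm h

theorem pcomp.ne (h : pcomp a b) : a ≠ b := by
  rintro rfl
  exact h.elim (lt_irrefl a) (lt_irrefl a)

def incompGraph (X : Type*) [PartialOrder X] : SimpleGraph X := (SimpleGraph.fromRel (· < ·))ᶜ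

@[simp]
theorem incompGraph_adj : (incompGraph X).Adj a b ↔ a ≠ b ∧ ¬ pcomp a b := by
  simp only [incompGraph, compl_adj, fromRel_adj, pcomp]
  tauto

theorem pline_mem_plines (h : a ≠ b) : pline a b ∈ plines X := ⟨a, b, h, rfl⟩

theorem pline_of_not_pcomp (h : ¬ pcomp a b) : pline a b = {a, b} := if_neg h

theorem pline_of_pcomp (h : pcomp a b) :
    pline a b = ((incompGraph X).neighborSet a ∪ (incompGraph X).neighborSet b)ᶜ := by
  ext x
  simp only [pline, if_pos h, Set.mem_union, Set.mem_insert_iff, Set.mem_singleton_iff,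
    Set.mem_ofPred_eq, Set.mem_compl_iff, mem_neighborSet, incompGraph_adj, not_or, not_and,
    not_not]
  have := h.ne
  unfold pcomp at *
  by_cases hxa : x = a <;> by_cases hxb : x = b <;> simp [hxa, hxb] <;> tauto

theorem pline_ne_pair (hab : pcomp a b) (hcd : ¬ pcomp c d) : pline a b ≠ {c, d} := by
  intro h
  have ha : a ∈ ({c, d} : Set X) := h ▸ by simp [pline, if_pos hab]
  have hb : b ∈ ({c, d} : Set X) := h ▸ by simp [pline, if_pos hab]
  simp only [Set.mem_insert_iff, Set.mem_singleton_iff] at ha hb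
  rcases ha with rfl | rfl <;> rcases hb with rfl | rfl
  exacts [hab.ne rfl, hcd hab, hcd hab.symm, hab.ne rfl]

theorem pcomp_of_connectedComponentMk_ne
    (h : (incompGraph X).connectedComponentMk a ≠ (incompGraph X).connectedComponentMk b) :
    pcomp a b := by
  by_contra hab
  exact h (ConnectedComponent.connectedComponentMk_eq_of_adj
    ((incompGraph_adj).2 ⟨fun hab => h (hab ▸ rfl), hab⟩))

theorem neighborSet_eq_of_pline_eq {x y y' : X}
    (hy : (incompGraph X).connectedComponentMk x ≠ (incompGraph X).connectedComponentMk y)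
    (hy' : (incompGraph X).connectedComponentMk x ≠ (incompGraph X).connectedComponentMk y')
    (h : pline x y = pline x y') :
    (incompGraph X).neighborSet y = (incompGraph X).neighborSet y' := by
  rw [pline_of_pcomp (pcomp_of_connectedComponentMk_ne hy),
    pline_of_pcomp (pcomp_of_connectedComponentMk_ne hy'), compl_inj_iff] at h
  rw [← (disjoint_neighborSet_of_connectedComponentMk_ne hy).sup_sdiff_cancel_left,
    ← (disjoint_neighborSet_of_connectedComponentMk_ne hy').sup_sdiff_cancel_left]
  exact congrArg (· \ _) h

theorem eq_of_neighborSet_eq_empty (huniv : ∀ a b : X, a ≠ b → pline a b ≠ Set.univ)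
    (ha : (incompGraph X).neighborSet a = ∅) (hb : (incompGraph X).neighborSet b = ∅) :
    a = b := by
  by_contra hab
  have hcomp : pcomp a b := by
    by_contra hcomp
    exact (Set.eq_empty_iff_forall_notMem.1 ha) b ((incompGraph_adj).2 ⟨hab, hcomp⟩)
  exact huniv a b hab (by rw [pline_of_pcomp hcomp, ha, hb, Set.union_empty, Set.compl_empty])

theorem exists_forall_neighborSet_nonempty [Nonempty X]
    (huniv : ∀ a b : X, a ≠ b → pline a b ≠ Set.univ) :
    ∃ c₀ : (incompGraph X).ConnectedComponent, ∀ v,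
      (incompGraph X).connectedComponentMk v ≠ c₀ → ((incompGraph X).neighborSet v).Nonempty := by
  by_cases hiso : ∃ f, (incompGraph X).neighborSet f = ∅
  · obtain ⟨f, hf⟩ := hiso
    refine ⟨(incompGraph X).connectedComponentMk f,
      fun v hv => Set.nonempty_iff_ne_empty.2 fun he => hv ?_⟩
    rw [eq_of_neighborSet_eq_empty huniv he hf]
  · push Not at hiso
    exact ⟨(incompGraph X).connectedComponentMk (Classical.arbitrary X), fun v _ => hiso v⟩

/-- The lines through the representative of `c₀` and the representatives of the other components
are distinct; one more is obtained through a neighbour `z` of the representative `u₁` of some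
`c₁ ≠ c₀`, since `u₁ ∈ N(z) \ N(u₁)`. -/
theorem exists_injective_pline_pcomp (huniv : ∀ a b : X, a ≠ b → pline a b ≠ Set.univ)
    (h2 : ∃ a b : X, a < b) :
    ∃ ψ : (incompGraph X).ConnectedComponent → Set X, Function.Injective ψ ∧
      ∀ c, ∃ a b, pcomp a b ∧ ψ c = pline a b := by
  obtain ⟨a, b, hab⟩ := h2
  rcases subsingleton_or_nontrivial (incompGraph X).ConnectedComponent with hsub | hnt
  · exact ⟨fun _ => pline a b, fun c c' _ => Subsingleton.elim c c',
      fun _ => ⟨a, b, Or.inl hab, rfl⟩⟩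
  have : Nonempty X := ⟨a⟩
  set G := incompGraph X
  obtain ⟨c₀, hc₀⟩ := exists_forall_neighborSet_nonempty huniv
  obtain ⟨c₁, hc₁⟩ := exists_ne c₀
  obtain ⟨z, hz : G.Adj c₁.out z⟩ := hc₀ c₁.out (by rwa [connectedComponentMk_out])
  have hNz : G.neighborSet z ≠ G.neighborSet c₁.out := fun h =>
    G.irrefl (show c₁.out ∈ G.neighborSet c₁.out from h ▸ hz.symm)
  let y : G.ConnectedComponent → X := fun c => if c = c₀ then z else c.out
  have hy : ∀ c, G.connectedComponentMk (y c) = if c = c₀ then c₁ else c := by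
    intro c
    by_cases hc : c = c₀
    · simp only [y, if_pos hc, ← ConnectedComponent.connectedComponentMk_eq_of_adj hz,
        connectedComponentMk_out]
    · simp only [y, if_neg hc, connectedComponentMk_out]
  have hy₀ : ∀ c, G.connectedComponentMk c₀.out ≠ G.connectedComponentMk (y c) := by
    intro c
    rw [hy, connectedComponentMk_out]
    split_ifs with hc
    exacts [hc₁.symm, Ne.symm hc]
  refine ⟨fun c => pline c₀.out (y c), fun c c' h => ?_,
    fun c => ⟨_, _, pcomp_of_connectedComponentMk_ne (hy₀ c), rfl⟩⟩
  have hN := neighborSet_eq_of_pline_eq (hy₀ c) (hy₀ c') h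
  have hcc := connectedComponentMk_eq_of_neighborSet_eq
    (hc₀ _ (by rw [← connectedComponentMk_out c₀]; exact (hy₀ c).symm)) hN
  rw [hy, hy] at hcc
  by_cases hc : c = c₀ <;> by_cases hc' : c' = c₀ <;> simp only [hc, hc', if_true, if_false] at hcc
  · rw [hc, hc']
  · subst hc hcc
    exact absurd (by simpa [y, hc'] using hN) hNz
  · subst hc' hcc
    exact absurd (by simpa [y, hc] using hN.symm) hNz
  · exact hcc

end Poset

theorem stmt_10 {X : Type*} [Fintype X] [PartialOrder X] (n : ℕ)
    (hn : Fintype.card X = n)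
    (h2 : ∃ a b : X, a < b)
    (huniv : ∀ a b : X, a ≠ b → pline a b ≠ Set.univ) :
    n ≤ (plines X).ncard := by
  subst hn
  set G := incompGraph X
  obtain ⟨ψ, hψ, hψline⟩ := exists_injective_pline_pcomp huniv h2
  obtain ⟨p, hp, hpinj⟩ := G.exists_injOn_parent_edge
  let roots : Set X := {v | (G.connectedComponentMk v).out = v}
  let Φ : X → Set X := roots.piecewise (fun v => ψ (G.connectedComponentMk v)) (fun v => {v, p v})
  have hΦ : ∀ v, Φ v ∈ plines X := by
    intro v
    by_cases hv : v ∈ roots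
    · obtain ⟨a, b, hab, hline⟩ := hψline (G.connectedComponentMk v)
      simpa only [Φ, Set.piecewise_eq_of_mem _ _ _ hv, hline] using pline_mem_plines hab.ne
    · have hadj := (incompGraph_adj).1 (hp v hv)
      simpa only [Φ, Set.piecewise_eq_of_notMem _ _ _ hv, pline_of_not_pcomp hadj.2]
        using pline_mem_plines hadj.1
  have hΦinj : Function.Injective Φ := by
    refine (roots.injective_piecewise_iff).2 ⟨fun v hv w hw h => ?_, fun v hv w hw h => ?_, ?_⟩
    · rw [← show _ = v from hv, ← show _ = w from hw, hψ h]
    · exact hpinj hv hw (Sym2.eq_iff.2 (Set.pair_eq_pair_iff.1 h))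
    · intro v _ w hw h
      obtain ⟨a, b, hab, hline⟩ := hψline (G.connectedComponentMk v)
      exact pline_ne_pair hab ((incompGraph_adj).1 (hp w hw)).2 (hline ▸ h)
  calc Fintype.card X = (Set.univ : Set X).ncard := by
        rw [Set.ncard_univ, Nat.card_eq_fintype_card]
    _ ≤ (plines X).ncard := Set.ncard_le_ncard_of_injOn Φ (fun v _ => hΦ v) hΦinj.injOn
end
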